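/- arXiv:1702.04413 — 7 statements merged into one kernel-verified Lean document; each statement's English description precedes it below -/
import Mathlib

section
/- Define H : ℝ³ → ℝ by H(ξ) = ‖ξ‖·√(2 + ‖ξ‖²). There exists a constant C > 0 such that for every integer k with 0 ≤ k ≤ 4 and every ξ ∈ ℝ³ with ξ ≠ 0, the k-th iterated Fréchet derivative of H at ξ satisfies ‖D^k H(ξ)‖ ≤ C·√(2 + ‖ξ‖²)·‖ξ‖^{1-k}. -/
/-!
A function that is smooth away from the origin and positively homogeneous of degree `d` satisfies
`‖Dⁿ f x‖ ≤ C ‖x‖ ^ (d - n)`: rescaling `x` to the unit sphere multiplies `Dⁿ f` by `‖x‖ ^ (d - n)`,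
and `Dⁿ f` is bounded on the compact sphere. Applied to the norm this gives
`‖Dⁱ ‖ξ‖‖ ≲ ‖ξ‖ ^ (1 - i)`. Since `√(m + ‖ξ‖²)` is the Euclidean norm of `(√m, ξ)` in `ℝ × E`,
the same bound for the norm of `ℝ × E` gives, with `⟨ξ⟩ = √(m + ‖ξ‖²)`,
`‖Dʲ ⟨ξ⟩‖ ≲ ⟨ξ⟩ ^ (1 - j) ≤ ⟨ξ⟩ ‖ξ‖ ^ (-j)`.
The Leibniz rule combines the two factors.
-/

open Set

theorem exists_pos_forall_le_mul_of_forall_exists {α : Type*} {p : α → Prop} {u w : ℕ → α → ℝ}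
    (hw : ∀ i x, p x → 0 ≤ w i x) (h : ∀ i, ∃ C, ∀ x, p x → u i x ≤ C * w i x) (k : ℕ) :
    ∃ C > 0, ∀ i ≤ k, ∀ x, p x → u i x ≤ C * w i x := by
  choose C hC using h
  refine ⟨∑ i ∈ Finset.range (k + 1), |C i| + 1, by positivity, fun i hi x hx => ?_⟩
  have hCi : C i ≤ ∑ j ∈ Finset.range (k + 1), |C j| + 1 :=
    calc C i ≤ |C i| := le_abs_self _
      _ ≤ ∑ j ∈ Finset.range (k + 1), |C j| :=
        Finset.single_le_sum (fun j _ => abs_nonneg (C j)) (Finset.mem_range.mpr (by omega))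
      _ ≤ _ := le_add_of_nonneg_right zero_le_one
  exact (hC i x hx).trans (mul_le_mul_of_nonneg_right hCi (hw i x hx))

section IteratedFDeriv

variable {𝕜 E F G : Type*} [NontriviallyNormedField 𝕜]
  [NormedAddCommGroup E] [NormedSpace 𝕜 E] [NormedAddCommGroup F] [NormedSpace 𝕜 F]
  [NormedAddCommGroup G] [NormedSpace 𝕜 G]

theorem norm_iteratedFDeriv_comp_continuousLinearMap_le {f : F → G} {s : Set F} {n : ℕ}
    (hs : IsOpen s) (hf : ContDiffOn 𝕜 n f s) (L : E →L[𝕜] F) {x : E} (hx : L x ∈ s) :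
    ‖iteratedFDeriv 𝕜 n (f ∘ L) x‖ ≤ ‖iteratedFDeriv 𝕜 n f (L x)‖ * ‖L‖ ^ n := by
  have hs' : IsOpen (L ⁻¹' s) := hs.preimage L.continuous
  rw [← iteratedFDerivWithin_of_isOpen n hs' hx, ← iteratedFDerivWithin_of_isOpen n hs hx,
    L.iteratedFDerivWithin_comp_right hf hs.uniqueDiffOn hs'.uniqueDiffOn hx le_rfl]
  simpa using (iteratedFDerivWithin 𝕜 n f s (L x)).norm_compContinuousLinearMap_le fun _ => L

theorem norm_iteratedFDeriv_mul_le_of_rpow {A : Type*} [NormedRing A] [NormedAlgebra 𝕜 A]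
    {f g : E → A} {s : Set E} {k : ℕ} (hs : IsOpen s) (hf : ContDiffOn 𝕜 k f s)
    (hg : ContDiffOn 𝕜 k g s) {x : E} (hx : x ∈ s) {r a b Cf Cg : ℝ} (hr : 0 < r)
    (hfx : ∀ i ≤ k, ‖iteratedFDeriv 𝕜 i f x‖ ≤ Cf * r ^ (a - i))
    (hgx : ∀ i ≤ k, ‖iteratedFDeriv 𝕜 i g x‖ ≤ Cg * r ^ (b - i)) :
    ‖iteratedFDeriv 𝕜 k (fun y => f y * g y) x‖ ≤ 2 ^ k * Cf * Cg * r ^ (a + b - k) := by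
  have hderiv {h : E → A} (i : ℕ) : iteratedFDerivWithin 𝕜 i h s x = iteratedFDeriv 𝕜 i h x :=
    iteratedFDerivWithin_of_isOpen i hs hx
  have hterm : ∀ i ∈ Finset.range (k + 1),
      (k.choose i : ℝ) * ‖iteratedFDeriv 𝕜 i f x‖ * ‖iteratedFDeriv 𝕜 (k - i) g x‖
        ≤ k.choose i * (Cf * Cg * r ^ (a + b - k)) := by
    intro i hi
    have hik : i ≤ k := Nat.lt_succ_iff.mp (Finset.mem_range.mp hi)
    have hpow : r ^ (a - i) * r ^ (b - (k - i : ℕ)) = r ^ (a + b - k) := by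
      rw [← Real.rpow_add hr, Nat.cast_sub hik]; ring_nf
    calc (k.choose i : ℝ) * ‖iteratedFDeriv 𝕜 i f x‖ * ‖iteratedFDeriv 𝕜 (k - i) g x‖
        ≤ k.choose i * (Cf * r ^ (a - i)) * (Cg * r ^ (b - (k - i : ℕ))) := by
          gcongr
          · exact mul_nonneg (Nat.cast_nonneg _) ((norm_nonneg _).trans (hfx i hik))
          · exact hfx i hik
          · exact hgx (k - i) (Nat.sub_le k i)
      _ = k.choose i * (Cf * Cg * r ^ (a + b - k)) := by rw [← hpow]; ring
  calc ‖iteratedFDeriv 𝕜 k (fun y => f y * g y) x‖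
      ≤ ∑ i ∈ Finset.range (k + 1),
          (k.choose i : ℝ) * ‖iteratedFDeriv 𝕜 i f x‖ * ‖iteratedFDeriv 𝕜 (k - i) g x‖ := by
        simpa only [hderiv] using norm_iteratedFDerivWithin_mul_le hf hg hs.uniqueDiffOn hx le_rfl
    _ ≤ ∑ i ∈ Finset.range (k + 1), k.choose i * (Cf * Cg * r ^ (a + b - k)) :=
        Finset.sum_le_sum hterm
    _ = 2 ^ k * Cf * Cg * r ^ (a + b - k) := by
        rw [← Finset.sum_mul, ← Nat.cast_sum, Nat.sum_range_choose]; push_cast; ring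

end IteratedFDeriv

section Homogeneous

variable {V F : Type*} [NormedAddCommGroup V] [NormedSpace ℝ V]
  [NormedAddCommGroup F] [NormedSpace ℝ F] {f : V → F} {d : ℝ}

theorem norm_iteratedFDeriv_smul_of_homogeneous
    (hhom : ∀ c : ℝ, 0 < c → ∀ x, f (c • x) = c ^ d • f x) (n : ℕ) {c : ℝ} (hc : 0 < c) (x : V) :
    ‖iteratedFDeriv ℝ n f (c • x)‖ = c ^ (d - n) * ‖iteratedFDeriv ℝ n f x‖ := by
  let scaleV : V ≃L[ℝ] V := ContinuousLinearEquiv.smulLeft (Units.mk0 c hc.ne')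
  let scaleF : F ≃L[ℝ] F := ContinuousLinearEquiv.smulLeft (Units.mk0 (c ^ d) (by positivity))
  have hD := congrArg (iteratedFDeriv ℝ n · x) (show f ∘ scaleV = scaleF ∘ f from
    funext fun y => hhom c hc y)
  rw [ContinuousLinearEquiv.iteratedFDeriv_comp_left, ← iteratedFDerivWithin_univ,
    ← preimage_univ (f := scaleV),
    scaleV.iteratedFDerivWithin_comp_right f uniqueDiffOn_univ (mem_univ _),
    iteratedFDerivWithin_univ] at hD
  have hleft : (iteratedFDeriv ℝ n f (c • x)).compContinuousLinearMap
      (fun _ => (scaleV : V →L[ℝ] V)) = c ^ n • iteratedFDeriv ℝ n f (c • x) := by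
    ext v
    simp [scaleV, ContinuousMultilinearMap.map_smul_univ]
  have hright : (scaleF : F →L[ℝ] F).compContinuousMultilinearMap (iteratedFDeriv ℝ n f x)
      = c ^ d • iteratedFDeriv ℝ n f x := by
    ext v
    simp [scaleF]
  have hnorm := congrArg norm hD
  rw [show scaleV x = c • x from rfl, hleft, hright, norm_smul, norm_smul, Real.norm_eq_abs,
    Real.norm_eq_abs, abs_of_pos (by positivity), abs_of_pos (by positivity)] at hnorm
  rw [Real.rpow_sub hc, Real.rpow_natCast, div_mul_eq_mul_div, ← hnorm]
  field_simp

theorem exists_norm_iteratedFDeriv_le_of_homogeneous [ProperSpace V] {n : ℕ}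
    (hf : ∀ x ≠ 0, ContDiffAt ℝ n f x) (hhom : ∀ c : ℝ, 0 < c → ∀ x, f (c • x) = c ^ d • f x) :
    ∃ C, ∀ x ≠ 0, ‖iteratedFDeriv ℝ n f x‖ ≤ C * ‖x‖ ^ (d - n) := by
  have hcont : ContinuousOn (iteratedFDeriv ℝ n f) (Metric.sphere 0 1) := fun u hu =>
    ((hf u (ne_zero_of_mem_unit_sphere ⟨u, hu⟩)).continuousAt_iteratedFDeriv
      le_rfl).continuousWithinAt
  obtain ⟨C, hC⟩ := (isCompact_sphere (0 : V) 1).exists_bound_of_continuousOn hcont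
  refine ⟨C, fun x hx => ?_⟩
  have hx' : 0 < ‖x‖ := norm_pos_iff.mpr hx
  have hu : ‖x‖⁻¹ • x ∈ Metric.sphere (0 : V) 1 := by
    rw [mem_sphere_zero_iff_norm, norm_smul, norm_inv, norm_norm, inv_mul_cancel₀ hx'.ne']
  calc ‖iteratedFDeriv ℝ n f x‖
      = ‖x‖ ^ (d - n) * ‖iteratedFDeriv ℝ n f (‖x‖⁻¹ • x)‖ := by
        rw [← norm_iteratedFDeriv_smul_of_homogeneous hhom n hx', smul_inv_smul₀ hx'.ne']
    _ ≤ C * ‖x‖ ^ (d - n) := by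
        rw [mul_comm]; exact mul_le_mul_of_nonneg_right (hC _ hu) (by positivity)

end Homogeneous

section JapaneseBracket

variable {E : Type*} [NormedAddCommGroup E] [InnerProductSpace ℝ E] [FiniteDimensional ℝ E]

theorem exists_norm_iteratedFDeriv_sqrt_add_norm_sq_le {m : ℝ} (hm : 0 < m) (n : ℕ) :
    ∃ C, ∀ ξ : E, ‖iteratedFDeriv ℝ n (fun ξ : E => √(m + ‖ξ‖ ^ 2)) ξ‖ ≤
      C * √(m + ‖ξ‖ ^ 2) ^ (1 - n : ℝ) := by
  let L : E →L[ℝ] WithLp 2 (ℝ × E) :=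
    (WithLp.prodContinuousLinearEquiv 2 ℝ ℝ E).symm.toContinuousLinearMap.comp
      (ContinuousLinearMap.inr ℝ ℝ E)
  let a : WithLp 2 (ℝ × E) := WithLp.toLp 2 (√m, 0)
  have hnorm (ξ : E) : ‖L ξ + a‖ = √(m + ‖ξ‖ ^ 2) := by
    rw [WithLp.prod_norm_eq_of_L2]
    simp [L, a, Real.sq_sqrt hm.le]
  have hL : ‖L‖ ≤ 1 := by
    refine L.opNorm_le_bound zero_le_one fun ξ => le_of_eq ?_
    rw [WithLp.prod_norm_eq_of_L2]
    simp [L]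
  obtain ⟨C, hC⟩ := exists_norm_iteratedFDeriv_le_of_homogeneous (n := n) (d := 1)
    (fun p hp => contDiffAt_norm ℝ hp) fun c hc (p : WithLp 2 (ℝ × E)) => by
      simp [norm_smul, abs_of_pos hc]
  refine ⟨C, fun ξ => ?_⟩
  have hne : L ξ + a ≠ 0 := norm_pos_iff.mp (by rw [hnorm]; positivity)
  have hcomp : (fun ξ : E => √(m + ‖ξ‖ ^ 2)) = (fun p => ‖p + a‖) ∘ L :=
    funext fun ξ => (hnorm ξ).symm
  have hsmooth : ContDiffOn ℝ n (fun p => ‖p + a‖) {p | p + a ≠ 0} := fun p hp =>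
    ((contDiffAt_norm ℝ hp).comp p (contDiffAt_id.add contDiffAt_const)).contDiffWithinAt
  calc ‖iteratedFDeriv ℝ n (fun ξ : E => √(m + ‖ξ‖ ^ 2)) ξ‖
      ≤ ‖iteratedFDeriv ℝ n (fun p => ‖p + a‖) (L ξ)‖ * ‖L‖ ^ n := by
        rw [hcomp]
        exact norm_iteratedFDeriv_comp_continuousLinearMap_le
          (isOpen_ne_fun (continuous_add_const a) continuous_const) hsmooth L hne
    _ ≤ ‖iteratedFDeriv ℝ n norm (L ξ + a)‖ := by
        rw [iteratedFDeriv_comp_add_right]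
        exact mul_le_of_le_one_right (norm_nonneg _) (pow_le_one₀ (norm_nonneg L) hL)
    _ ≤ C * √(m + ‖ξ‖ ^ 2) ^ (1 - n : ℝ) := by rw [← hnorm]; exact hC _ hne

theorem exists_norm_iteratedFDeriv_norm_mul_sqrt_add_norm_sq_le {m : ℝ} (hm : 0 < m) (k : ℕ) :
    ∃ C, ∀ ξ : E, ξ ≠ 0 → ‖iteratedFDeriv ℝ k (fun ξ : E => ‖ξ‖ * √(m + ‖ξ‖ ^ 2)) ξ‖ ≤
      C * √(m + ‖ξ‖ ^ 2) * ‖ξ‖ ^ (1 - k : ℝ) := by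
  obtain ⟨A, -, hA⟩ := exists_pos_forall_le_mul_of_forall_exists (p := fun ξ : E => ξ ≠ 0)
    (w := fun i ξ => ‖ξ‖ ^ (1 - i : ℝ)) (fun _ _ _ => by positivity)
    (fun i => exists_norm_iteratedFDeriv_le_of_homogeneous (fun ξ hξ => contDiffAt_norm ℝ hξ)
      fun c hc ξ => by simp [norm_smul, abs_of_pos hc]) k
  obtain ⟨B, hB, hBP⟩ := exists_pos_forall_le_mul_of_forall_exists (p := fun _ : E => True)
    (w := fun i ξ => √(m + ‖ξ‖ ^ 2) ^ (1 - i : ℝ)) (fun _ _ _ => by positivity)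
    (fun i => (exists_norm_iteratedFDeriv_sqrt_add_norm_sq_le hm i).imp fun _ hC ξ _ => hC ξ) k
  refine ⟨2 ^ k * A * B, fun ξ hξ => ?_⟩
  have hr : 0 < ‖ξ‖ := norm_pos_iff.mpr hξ
  have hR : 0 < √(m + ‖ξ‖ ^ 2) := by positivity
  have hrR : ‖ξ‖ ≤ √(m + ‖ξ‖ ^ 2) := Real.le_sqrt_of_sq_le (by linarith)
  have hbracket (i : ℕ) :
      √(m + ‖ξ‖ ^ 2) ^ (1 - i : ℝ) ≤ √(m + ‖ξ‖ ^ 2) * ‖ξ‖ ^ (0 - i : ℝ) :=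
    calc √(m + ‖ξ‖ ^ 2) ^ (1 - i : ℝ) = √(m + ‖ξ‖ ^ 2) * √(m + ‖ξ‖ ^ 2) ^ (-(i : ℝ)) := by
          rw [sub_eq_add_neg, Real.rpow_add hR, Real.rpow_one]
      _ ≤ √(m + ‖ξ‖ ^ 2) * ‖ξ‖ ^ (0 - i : ℝ) := by
          rw [zero_sub]
          exact mul_le_mul_of_nonneg_left (Real.rpow_le_rpow_of_nonpos hr hrR (by simp)) hR.le
  have hP : ContDiff ℝ k fun ξ : E => √(m + ‖ξ‖ ^ 2) :=
    (contDiff_const.add (contDiff_norm_sq ℝ)).sqrt fun ξ => (by positivity : 0 < m + ‖ξ‖ ^ 2).ne'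
  refine (norm_iteratedFDeriv_mul_le_of_rpow isOpen_compl_singleton
    (fun x hx => (contDiffAt_norm ℝ hx).contDiffWithinAt) hP.contDiffOn hξ hr
    (fun i hi => hA i hi ξ hξ) (Cg := B * √(m + ‖ξ‖ ^ 2)) (b := 0) fun i hi => ?_).trans_eq ?_
  · rw [mul_assoc]
    exact (hBP i hi ξ trivial).trans (mul_le_mul_of_nonneg_left (hbracket i) hB.le)
  · ring_nf

end JapaneseBracket

/-- For `H(ξ) = ‖ξ‖·√(2 + ‖ξ‖²)` on `ℝ³`, there is `C > 0` such that for `0 ≤ k ≤ 4`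
and `ξ ≠ 0`, `‖D^k H(ξ)‖ ≤ C·√(2 + ‖ξ‖²)·‖ξ‖^{1-k}`. -/
theorem stmt_4 (H : EuclideanSpace ℝ (Fin 3) → ℝ)
    (hH : ∀ ξ : EuclideanSpace ℝ (Fin 3), H ξ = ‖ξ‖ * Real.sqrt (2 + ‖ξ‖ ^ 2)) :
    ∃ C > 0, ∀ k : ℕ, k ≤ 4 → ∀ ξ : EuclideanSpace ℝ (Fin 3), ξ ≠ 0 →
      ‖iteratedFDeriv ℝ k H ξ‖ ≤ C * Real.sqrt (2 + ‖ξ‖ ^ 2) * ‖ξ‖ ^ ((1 : ℝ) - k) := by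
  obtain rfl : H = fun ξ => ‖ξ‖ * √(2 + ‖ξ‖ ^ 2) := funext hH
  obtain ⟨C, hC, hCH⟩ := exists_pos_forall_le_mul_of_forall_exists
    (p := fun ξ : EuclideanSpace ℝ (Fin 3) => ξ ≠ 0)
    (w := fun k ξ => √(2 + ‖ξ‖ ^ 2) * ‖ξ‖ ^ ((1 : ℝ) - k)) (fun _ _ _ => by positivity)
    (fun k => (exists_norm_iteratedFDeriv_norm_mul_sqrt_add_norm_sq_le two_pos k).imp
      fun _ hC ξ hξ => (hC ξ hξ).trans_eq (mul_assoc _ _ _)) 4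
  exact ⟨C, hC, fun k hk ξ hξ => (hCH k hk ξ hξ).trans_eq (mul_assoc _ _ _).symm⟩
end

section
/- Define H : ℝ³ → ℝ by H(ξ) = ‖ξ‖·√(2 + ‖ξ‖²). For every ξ ∈ ℝ³ with ξ ≠ 0, the second derivative (Hessian) of H at ξ satisfies: D²H(ξ)[ξ/‖ξ‖, ξ/‖ξ‖] = 2‖ξ‖(3 + ‖ξ‖²)/(2 + ‖ξ‖²)^{3/2}; for every v ∈ ℝ³ orthogonal to ξ with ‖v‖ = 1, D²H(ξ)[v, v] = 2(1 + ‖ξ‖²)/(‖ξ‖·√(2 + ‖ξ‖²)); and D²H(ξ)[ξ, v] = 0 for every v orthogonal to ξ. In particular the Hessian of H at ξ has eigenvalue 2‖ξ‖(3+‖ξ‖²)/(2+‖ξ‖²)^{3/2} with eigenvector ξ and eigenvalue 2(1+‖ξ‖²)/(‖ξ‖√(2+‖ξ‖²)) with multiplicity 2 on the orthogonal complement of ξ. -/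
/-!
Writing `t = ‖ξ‖²`, we have `H(ξ) = ψ(t)` with `ψ(t) = √(t² + 2t)`. For any radial function
`y ↦ f(‖y‖²)` the chain and product rules give
`D²[f(‖·‖²)](x)[u, v] = 4 f''(t) ⟪x, u⟫ ⟪x, v⟫ + 2 f'(t) ⟪u, v⟫`, so the Hessian is a multiple
of the identity plus a rank-one term along `x`. Here `ψ' = (t + 1)/ψ` and `ψ'' = -1/ψ³`, and
`ψ(‖ξ‖²) = ‖ξ‖ √(2 + ‖ξ‖²)`.
-/

open Real InnerProductSpace Filter Topology

theorem hasDerivAt_sqrt_sq_add_two_mul {t : ℝ} (ht : 0 < t) :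
    HasDerivAt (fun s => √(s ^ 2 + 2 * s)) ((t + 1) / √(t ^ 2 + 2 * t)) t := by
  have hpos : 0 < t ^ 2 + 2 * t := by positivity
  have hpoly : HasDerivAt (fun s : ℝ => s ^ 2 + 2 * s) (2 * (t + 1)) t :=
    ((hasDerivAt_pow 2 t).add ((hasDerivAt_id t).const_mul 2)).congr_deriv (by ring)
  refine (hpoly.sqrt hpos.ne').congr_deriv ?_
  field_simp

theorem hasDerivAt_add_one_div_sqrt_sq_add_two_mul {t : ℝ} (ht : 0 < t) :
    HasDerivAt (fun s => (s + 1) / √(s ^ 2 + 2 * s)) (-1 / √(t ^ 2 + 2 * t) ^ 3) t := by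
  have hpos : 0 < t ^ 2 + 2 * t := by positivity
  have hsqrt : 0 < √(t ^ 2 + 2 * t) := sqrt_pos.2 hpos
  refine (((hasDerivAt_id' t).add_const 1).div (hasDerivAt_sqrt_sq_add_two_mul ht)
    hsqrt.ne').congr_deriv ?_
  have hsq : √(t ^ 2 + 2 * t) ^ 2 = t ^ 2 + 2 * t := sq_sqrt hpos.le
  generalize √(t ^ 2 + 2 * t) = w at hsqrt hsq ⊢
  field_simp
  linear_combination hsq

theorem mul_sqrt_two_add_sq {r : ℝ} (hr : 0 ≤ r) :
    r * √(2 + r ^ 2) = √((r ^ 2) ^ 2 + 2 * r ^ 2) := by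
  rw [show (r ^ 2) ^ 2 + 2 * r ^ 2 = r ^ 2 * (2 + r ^ 2) by ring, sqrt_mul (sq_nonneg r),
    sqrt_sq hr]

section InnerProductSpace

variable {E : Type*} [NormedAddCommGroup E] [InnerProductSpace ℝ E]

theorem hasFDerivAt_comp_norm_sq {f : ℝ → ℝ} {f' : ℝ} {x : E}
    (hf : HasDerivAt f f' (‖x‖ ^ 2)) :
    HasFDerivAt (fun y : E => f (‖y‖ ^ 2)) ((2 * f') • innerSL ℝ x) x := by
  refine (hf.comp_hasFDerivAt x (hasStrictFDerivAt_norm_sq x).hasFDerivAt).congr_fderiv ?_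
  module

theorem iteratedFDeriv_two_comp_norm_sq_apply {f f' : ℝ → ℝ} {f'' : ℝ} {x : E}
    (hf : ∀ᶠ t in 𝓝 (‖x‖ ^ 2), HasDerivAt f (f' t) t) (hf' : HasDerivAt f' f'' (‖x‖ ^ 2))
    (u v : E) :
    iteratedFDeriv ℝ 2 (fun y : E => f (‖y‖ ^ 2)) x ![u, v] =
      4 * f'' * ⟪x, u⟫_ℝ * ⟪x, v⟫_ℝ + 2 * f' (‖x‖ ^ 2) * ⟪u, v⟫_ℝ := by
  have hgrad : fderiv ℝ (fun y : E => f (‖y‖ ^ 2)) =ᶠ[𝓝 x]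
      (fun y : E => 2 * f' (‖y‖ ^ 2)) • fun y => innerSL ℝ y := by
    filter_upwards [(continuous_norm.pow 2).continuousAt.eventually hf] with y hy
    exact (hasFDerivAt_comp_norm_sq hy).fderiv
  have hcoef : HasFDerivAt (fun y : E => 2 * f' (‖y‖ ^ 2)) ((4 * f'') • innerSL ℝ x) x :=
    ((hasFDerivAt_comp_norm_sq hf').const_mul 2).congr_fderiv (by module)
  rw [iteratedFDeriv_two_apply, hgrad.fderiv_eq,
    (hcoef.smul (innerSL ℝ : E →L[ℝ] E →L[ℝ] ℝ).hasFDerivAt).fderiv]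
  simp only [Matrix.cons_val_zero, Matrix.cons_val_one, add_apply, smul_apply,
    ContinuousLinearMap.smulRight_apply, smul_eq_mul, innerSL_apply_apply (𝕜 := ℝ)]
  ring

theorem iteratedFDeriv_two_norm_mul_sqrt_two_add_norm_sq_apply {ξ : E} (hξ : ξ ≠ 0) (u v : E) :
    iteratedFDeriv ℝ 2 (fun y : E => ‖y‖ * √(2 + ‖y‖ ^ 2)) ξ ![u, v] =
      -4 / (‖ξ‖ * √(2 + ‖ξ‖ ^ 2)) ^ 3 * ⟪ξ, u⟫_ℝ * ⟪ξ, v⟫_ℝ +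
        2 * (1 + ‖ξ‖ ^ 2) / (‖ξ‖ * √(2 + ‖ξ‖ ^ 2)) * ⟪u, v⟫_ℝ := by
  have ht : 0 < ‖ξ‖ ^ 2 := by positivity
  simp_rw [mul_sqrt_two_add_sq (norm_nonneg _)]
  rw [iteratedFDeriv_two_comp_norm_sq_apply (f := fun t => √(t ^ 2 + 2 * t))
    ((eventually_gt_nhds ht).mono fun _ => hasDerivAt_sqrt_sq_add_two_mul)
    (hasDerivAt_add_one_div_sqrt_sq_add_two_mul ht)]
  ring

end InnerProductSpace

/-- For `H(ξ) = ‖ξ‖·√(2 + ‖ξ‖²)` on `ℝ³` and `ξ ≠ 0`, the Hessian of `H` at `ξ` satisfies: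
`D²H(ξ)[ξ/‖ξ‖, ξ/‖ξ‖] = 2‖ξ‖(3 + ‖ξ‖²)/(2 + ‖ξ‖²)^{3/2}`; for unit `v ⊥ ξ`,
`D²H(ξ)[v, v] = 2(1 + ‖ξ‖²)/(‖ξ‖·√(2 + ‖ξ‖²))`; and `D²H(ξ)[ξ, v] = 0` for `v ⊥ ξ`. -/
theorem stmt_5 (H : EuclideanSpace ℝ (Fin 3) → ℝ)
    (hH : ∀ ξ : EuclideanSpace ℝ (Fin 3), H ξ = ‖ξ‖ * Real.sqrt (2 + ‖ξ‖ ^ 2))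
    (ξ : EuclideanSpace ℝ (Fin 3)) (hξ : ξ ≠ 0) :
    iteratedFDeriv ℝ 2 H ξ ![‖ξ‖⁻¹ • ξ, ‖ξ‖⁻¹ • ξ] =
        2 * ‖ξ‖ * (3 + ‖ξ‖ ^ 2) / (2 + ‖ξ‖ ^ 2) ^ ((3 : ℝ) / 2) ∧
    (∀ v : EuclideanSpace ℝ (Fin 3), (inner ℝ ξ v : ℝ) = 0 → ‖v‖ = 1 →
      iteratedFDeriv ℝ 2 H ξ ![v, v] =
        2 * (1 + ‖ξ‖ ^ 2) / (‖ξ‖ * Real.sqrt (2 + ‖ξ‖ ^ 2))) ∧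
    (∀ v : EuclideanSpace ℝ (Fin 3), (inner ℝ ξ v : ℝ) = 0 →
      iteratedFDeriv ℝ 2 H ξ ![ξ, v] = 0) := by
  obtain rfl : H = fun y => ‖y‖ * √(2 + ‖y‖ ^ 2) := funext hH
  simp only [iteratedFDeriv_two_norm_mul_sqrt_two_add_norm_sq_apply hξ]
  refine ⟨?_, fun v hv hv1 => ?_, fun v hv => ?_⟩
  · have hs : 0 < √(2 + ‖ξ‖ ^ 2) := sqrt_pos.2 (by positivity)
    have hs2 : √(2 + ‖ξ‖ ^ 2) ^ 2 = 2 + ‖ξ‖ ^ 2 := sq_sqrt (by positivity)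
    rw [real_inner_smul_right, real_inner_smul_left, real_inner_smul_right,
      real_inner_self_eq_norm_sq, rpow_div_two_eq_sqrt _ (by positivity), rpow_ofNat]
    generalize √(2 + ‖ξ‖ ^ 2) = s at hs hs2 ⊢
    field_simp
    linear_combination 2 * (1 + ‖ξ‖ ^ 2) * hs2
  · rw [hv, real_inner_self_eq_norm_sq, hv1]
    ring
  · rw [hv]
    ring
end

section
/- Define H : ℝ³ → ℝ by H(ξ) = ‖ξ‖·√(2 + ‖ξ‖²), so that for ξ ≠ 0 the gradient is ∇H(ξ) = h'(‖ξ‖)·ξ/‖ξ‖ with h'(r) = 2(1+r²)/√(2+r²). There exists a constant C > 0 such that for all nonzero x, y ∈ ℝ³ and each sign ε ∈ {+1, -1}: ‖∇H(x) + ε·∇H(y)‖ ≤ C·( |‖x‖ - ‖y‖| · max(‖x‖/√(2+‖x‖²), ‖y‖/√(2+‖y‖²)) + min(√(2+‖x‖²), √(2+‖y‖²)) · sin(∠(x, -ε·y)/2) ), where ∠(u,w) ∈ [0, π] denotes the angle between nonzero vectors u and w determined by cos ∠(u,w) = ⟨u,w⟩/(‖u‖·‖w‖). -/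
/-!
Away from the origin `∇H(ξ) = h'(|ξ|) ξ/|ξ|` with `h'(r) = 2(1+r²)/⟨r⟩`. For positive weights
`a, b` and unit vectors `u, v` one has `|a u + b v| ≤ |a - b| + min(a, b) |u + v|`, and
`|u + v| = 2 sin(½∠(u, -v))`. The radial part is controlled by the mean value theorem, since
`|h''(r)| ≤ 3 r/⟨r⟩` and `r/⟨r⟩` is increasing; the angular part by `h'(r) ≤ 2⟨r⟩`.
-/

open Real InnerProductGeometry Set

noncomputable def dispersionDeriv (r : ℝ) : ℝ := 2 * (1 + r ^ 2) / √(2 + r ^ 2)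

lemma dispersionDeriv_pos (r : ℝ) : 0 < dispersionDeriv r := by
  unfold dispersionDeriv; positivity

lemma dispersionDeriv_le (r : ℝ) : dispersionDeriv r ≤ 2 * √(2 + r ^ 2) := by
  have hs : √(2 + r ^ 2) ^ 2 = 2 + r ^ 2 := sq_sqrt (by positivity)
  rw [dispersionDeriv, div_le_iff₀ (by positivity)]
  nlinarith

lemma hasDerivAt_mul_sqrt_two_add_sq (r : ℝ) :
    HasDerivAt (fun t => t * √(2 + t ^ 2)) (dispersionDeriv r) r := by
  have hq : HasDerivAt (fun t => 2 + t ^ 2) (2 * r) r := by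
    simpa using (hasDerivAt_pow 2 r).const_add 2
  have hs : √(2 + r ^ 2) ^ 2 = 2 + r ^ 2 := sq_sqrt (by positivity)
  refine ((hasDerivAt_id' r).fun_mul (hq.sqrt (by positivity))).congr_deriv ?_
  rw [dispersionDeriv]
  field_simp
  linear_combination hs

lemma hasDerivAt_dispersionDeriv (r : ℝ) :
    HasDerivAt dispersionDeriv (2 * r * (3 + r ^ 2) / ((2 + r ^ 2) * √(2 + r ^ 2))) r := by
  have hq : HasDerivAt (fun t => 2 + t ^ 2) (2 * r) r := by
    simpa using (hasDerivAt_pow 2 r).const_add 2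
  have hn : HasDerivAt (fun t => 2 * (1 + t ^ 2)) (2 * (2 * r)) r := by
    simpa using ((hasDerivAt_pow 2 r).const_add 1).const_mul 2
  have hs : √(2 + r ^ 2) ^ 2 = 2 + r ^ 2 := sq_sqrt (by positivity)
  refine (hn.fun_div (hq.sqrt (by positivity)) (by positivity)).congr_deriv ?_
  field_simp
  linear_combination (r + r ^ 3) * hs

lemma monotone_div_sqrt_two_add_sq : Monotone fun t : ℝ => t / √(2 + t ^ 2) := by
  intro s t hst
  have hs0 : 0 < √(2 + s ^ 2) := by positivity
  have ht0 : 0 < √(2 + t ^ 2) := by positivity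
  have hs : √(2 + s ^ 2) ^ 2 = 2 + s ^ 2 := sq_sqrt (by positivity)
  have ht : √(2 + t ^ 2) ^ 2 = 2 + t ^ 2 := sq_sqrt (by positivity)
  simp only
  rw [div_le_div_iff₀ hs0 ht0]
  rcases le_total 0 s with hs_nonneg | hs_nonpos
  · nlinarith [mul_pos hs0 ht0, mul_nonneg hs_nonneg ht0.le,
      mul_nonneg (hs_nonneg.trans hst) hs0.le]
  rcases le_total t 0 with ht_nonpos | ht_nonneg
  · nlinarith [mul_pos hs0 ht0, mul_nonpos_iff.2 (Or.inr ⟨ht_nonpos, hs0.le⟩),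
      mul_nonpos_iff.2 (Or.inr ⟨hst.trans ht_nonpos, ht0.le⟩)]
  · nlinarith [mul_nonneg ht_nonneg hs0.le, mul_nonpos_iff.2 (Or.inr ⟨hs_nonpos, ht0.le⟩)]

lemma abs_dispersionDeriv_sub_le {r s : ℝ} (hr : 0 ≤ r) (hs : 0 ≤ s) :
    |dispersionDeriv r - dispersionDeriv s| ≤
      3 * |r - s| * max (r / √(2 + r ^ 2)) (s / √(2 + s ^ 2)) := by
  have hbound : ∀ t ∈ uIcc s r,
      ‖2 * t * (3 + t ^ 2) / ((2 + t ^ 2) * √(2 + t ^ 2))‖ ≤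
        3 * max (r / √(2 + r ^ 2)) (s / √(2 + s ^ 2)) := by
    intro t ht
    have ht0 : 0 ≤ t := (le_min hs hr).trans ht.1
    calc ‖2 * t * (3 + t ^ 2) / ((2 + t ^ 2) * √(2 + t ^ 2))‖
        = 2 * t * (3 + t ^ 2) / (2 + t ^ 2) / √(2 + t ^ 2) := by
          rw [norm_of_nonneg (by positivity), div_div]
      _ ≤ 3 * t / √(2 + t ^ 2) := by
          gcongr
          rw [div_le_iff₀ (by positivity)]
          nlinarith [sq_nonneg t]
      _ ≤ 3 * (max s r / √(2 + max s r ^ 2)) := by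
          rw [mul_div_assoc]
          exact mul_le_mul_of_nonneg_left (monotone_div_sqrt_two_add_sq ht.2) (by norm_num)
      _ = 3 * max (r / √(2 + r ^ 2)) (s / √(2 + s ^ 2)) := by
          rw [max_comm s r, monotone_div_sqrt_two_add_sq.map_max]
  have hmvt := (convex_uIcc s r).norm_image_sub_le_of_norm_hasDerivWithin_le
    (fun t _ => (hasDerivAt_dispersionDeriv t).hasDerivWithinAt) hbound
    left_mem_uIcc right_mem_uIcc
  rw [norm_eq_abs, norm_eq_abs] at hmvt
  linarith

section InnerProductSpace

variable {E : Type*} [NormedAddCommGroup E] [InnerProductSpace ℝ E]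

lemma hasGradientAt_norm [CompleteSpace E] {x : E} (hx : x ≠ 0) :
    HasGradientAt (‖·‖) (NormedSpace.normalize x) x := by
  have hnorm : HasFDerivAt (fun ξ : E => √(‖ξ‖ ^ 2))
      ((1 / (2 * √(‖x‖ ^ 2))) • (2 • innerSL ℝ x)) x :=
    (hasStrictFDerivAt_norm_sq x).hasFDerivAt.sqrt (by positivity)
  simp only [sqrt_sq (norm_nonneg _)] at hnorm
  rw [hasGradientAt_iff_hasFDerivAt]
  refine hnorm.congr_fderiv ?_
  ext v
  simp only [smul_apply, coe_innerSL_apply, InnerProductSpace.toDual_apply_apply,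
    NormedSpace.normalize, real_inner_smul_left, smul_eq_mul, nsmul_eq_mul, Nat.cast_ofNat]
  field_simp

lemma HasDerivAt.hasGradientAt_comp_norm [CompleteSpace E] {f : ℝ → ℝ} {f' : ℝ} {x : E}
    (hf : HasDerivAt f f' ‖x‖) (hx : x ≠ 0) :
    HasGradientAt (fun ξ => f ‖ξ‖) (f' • NormedSpace.normalize x) x := by
  rw [hasGradientAt_iff_hasFDerivAt, map_smulₛₗ, conj_trivial]
  exact hf.comp_hasFDerivAt x (hasGradientAt_norm hx).hasFDerivAt

lemma sin_half_angle_nonneg (x y : E) : 0 ≤ sin (angle x y / 2) :=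
  sin_nonneg_of_nonneg_of_le_pi (by linarith [angle_nonneg x y])
    (by linarith [angle_le_pi x y, pi_pos])

lemma norm_normalize_sub_normalize {x y : E} (hx : x ≠ 0) (hy : y ≠ 0) :
    ‖NormedSpace.normalize x - NormedSpace.normalize y‖ = 2 * sin (angle x y / 2) := by
  have hcos := norm_sub_sq_eq_norm_sq_add_norm_sq_sub_two_mul_norm_mul_norm_mul_cos_angle
    (NormedSpace.normalize x) (NormedSpace.normalize y)
  rw [angle_normalize_left, angle_normalize_right, NormedSpace.norm_normalize hx,
    NormedSpace.norm_normalize hy] at hcos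
  have hhalf : cos (angle x y) = 1 - 2 * sin (angle x y / 2) ^ 2 := by
    rw [← cos_two_mul_eq_one_sub, mul_div_cancel₀ _ two_ne_zero]
  refine (sq_eq_sq₀ (norm_nonneg _)
    (mul_nonneg zero_le_two (sin_half_angle_nonneg x y))).1 ?_
  rw [sq, hcos, hhalf]
  ring

lemma norm_smul_add_smul_le {a b : ℝ} (ha : 0 ≤ a) (hb : 0 ≤ b) {u v : E}
    (hu : ‖u‖ = 1) (hv : ‖v‖ = 1) : ‖a • u + b • v‖ ≤ |a - b| + min a b * ‖u + v‖ := by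
  wlog hab : a ≤ b generalizing a b u v
  · simpa only [add_comm (a • u), add_comm u, abs_sub_comm, min_comm] using
      this hb ha hv hu (le_of_not_ge hab)
  calc ‖a • u + b • v‖ = ‖a • (u + v) + (b - a) • v‖ := by congr 1; module
    _ ≤ ‖a • (u + v)‖ + ‖(b - a) • v‖ := norm_add_le _ _
    _ = |a - b| + min a b * ‖u + v‖ := by
      rw [norm_smul, norm_smul, hv, norm_of_nonneg ha, min_eq_left hab, norm_eq_abs,
        abs_sub_comm]
      ring

lemma norm_smul_normalize_add_smul_normalize_le {a b : ℝ} (ha : 0 ≤ a) (hb : 0 ≤ b) {x w : E}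
    (hx : x ≠ 0) (hw : w ≠ 0) :
    ‖a • NormedSpace.normalize x + b • NormedSpace.normalize w‖ ≤
      |a - b| + 2 * min a b * sin (angle x (-w) / 2) := by
  have h := norm_smul_add_smul_le ha hb (NormedSpace.norm_normalize hx)
    (NormedSpace.norm_normalize hw)
  rw [← sub_neg_eq_add (NormedSpace.normalize x), ← NormedSpace.normalize_neg,
    norm_normalize_sub_normalize hx (neg_ne_zero.2 hw)] at h
  linarith

end InnerProductSpace

/-- For `H(ξ) = ‖ξ‖·√(2 + ‖ξ‖²)` on `ℝ³`, there is `C > 0` such that for all nonzero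
`x, y` and each sign `ε ∈ {+1, -1}`:
`‖∇H(x) + ε∇H(y)‖ ≤ C·(|‖x‖-‖y‖|·max(‖x‖/⟨x⟩, ‖y‖/⟨y⟩) + min(⟨x⟩,⟨y⟩)·sin(∠(x, -εy)/2))`. -/
theorem stmt_6 (H : EuclideanSpace ℝ (Fin 3) → ℝ)
    (hH : ∀ ξ : EuclideanSpace ℝ (Fin 3), H ξ = ‖ξ‖ * Real.sqrt (2 + ‖ξ‖ ^ 2)) :
    ∃ C > 0, ∀ x y : EuclideanSpace ℝ (Fin 3), x ≠ 0 → y ≠ 0 →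
      ∀ ε : ℝ, ε = 1 ∨ ε = -1 →
      ‖gradient H x + ε • gradient H y‖ ≤
        C * (|‖x‖ - ‖y‖| *
              max (‖x‖ / Real.sqrt (2 + ‖x‖ ^ 2)) (‖y‖ / Real.sqrt (2 + ‖y‖ ^ 2)) +
            min (Real.sqrt (2 + ‖x‖ ^ 2)) (Real.sqrt (2 + ‖y‖ ^ 2)) *
              Real.sin (InnerProductGeometry.angle x (-(ε • y)) / 2)) := by
  refine ⟨4, by norm_num, fun x y hx hy ε hε => ?_⟩
  have hgrad : ∀ ξ ≠ 0, gradient H ξ = dispersionDeriv ‖ξ‖ • NormedSpace.normalize ξ :=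
    fun ξ hξ => by
      rw [funext hH]
      exact ((hasDerivAt_mul_sqrt_two_add_sq _).hasGradientAt_comp_norm hξ).gradient
  have hεy : ε • NormedSpace.normalize y = NormedSpace.normalize (ε • y) := by
    rcases hε with rfl | rfl <;> simp
  have hεy_ne : ε • y ≠ 0 := smul_ne_zero (by rcases hε with rfl | rfl <;> norm_num) hy
  have hsum := norm_smul_normalize_add_smul_normalize_le (dispersionDeriv_pos ‖x‖).le
    (dispersionDeriv_pos ‖y‖).le hx hεy_ne
  have hlip := abs_dispersionDeriv_sub_le (norm_nonneg x) (norm_nonneg y)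
  have hmin : min (dispersionDeriv ‖x‖) (dispersionDeriv ‖y‖) ≤
      2 * min √(2 + ‖x‖ ^ 2) √(2 + ‖y‖ ^ 2) := by
    rw [mul_min_of_nonneg _ _ zero_le_two]
    exact min_le_min (dispersionDeriv_le _) (dispersionDeriv_le _)
  have hmax : 0 ≤ max (‖x‖ / √(2 + ‖x‖ ^ 2)) (‖y‖ / √(2 + ‖y‖ ^ 2)) :=
    le_max_of_le_left (by positivity)
  rw [hgrad x hx, hgrad y hy, smul_comm, hεy]
  linarith [mul_le_mul_of_nonneg_right hmin (sin_half_angle_nonneg x (-(ε • y))),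
    mul_nonneg (abs_nonneg (‖x‖ - ‖y‖)) hmax]
end

section
/- Define H : ℝ³ → ℝ by H(ξ) = ‖ξ‖·√(2 + ‖ξ‖²). There exists a constant C > 0 such that for every integer k with 1 ≤ k ≤ 4 and all nonzero ξ₁, ξ₂ ∈ ℝ³, the k-th iterated Fréchet derivatives of H satisfy ‖D^k H(ξ₂) - D^k H(-ξ₁)‖ ≤ C·( √(2+‖ξ₁‖²)/‖ξ₁‖^k + √(2+‖ξ₂‖²)/‖ξ₂‖^k )·‖ξ₁ + ξ₂‖. -/
/-!
The norm is positively homogeneous of degree one, so compactness of the unit sphere gives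
`‖x‖ ^ k * ‖D^k ‖·‖ x‖ ≲ ‖x‖`. Since `√(2 + ‖x‖ ^ 2) = ‖(√2, x)‖` in `WithLp 2 (ℝ × E)`, the
same bound holds for `⟨x⟩ := √(2 + ‖x‖ ^ 2)`, and Leibniz' rule gives
`‖x‖ ^ k * ‖D^k H x‖ ≲ ‖x‖ * ⟨x⟩` for `H x = ‖x‖ * ⟨x⟩`.

For `D^k H b - D^k H a` with `‖a‖ ≤ ‖b‖`: if `‖b‖ ≤ 2 * ‖b - a‖`, both terms are bounded
separately; otherwise `a` lies in the ball of radius `‖b‖ / 2` around `b`, on which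
`‖D^(k+1) H‖ ≲ ⟨b⟩ / ‖b‖ ^ k`, and the mean value inequality applies.
-/

open Set Metric Finset

section NormDerivatives

variable {F : Type*} [NormedAddCommGroup F] [InnerProductSpace ℝ F]

theorem pow_mul_norm_iteratedFDeriv_norm_smul (k : ℕ) {r : ℝ} (hr : 0 < r) {x : F}
    (hx : x ≠ 0) :
    r ^ k * ‖iteratedFDeriv ℝ k (‖·‖) (r • x)‖ = r * ‖iteratedFDeriv ℝ k (‖·‖) x‖ := by
  -- an equivalence, so that no smoothness of the norm at `0` is needed to differentiate `‖·‖ ∘ e`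
  let e : F ≃L[ℝ] F := Units.mk0 r hr.ne' • ContinuousLinearEquiv.refl ℝ F
  have he : ∀ y, e y = r • y := fun y => rfl
  have h := e.iteratedFDerivWithin_comp_right (‖·‖) uniqueDiffOn_univ (mem_univ (e x)) k
  simp only [preimage_univ, iteratedFDerivWithin_univ] at h
  have hcomp : (‖·‖) ∘ e = r • (‖·‖ : F → ℝ) := by
    funext y
    simp [he, norm_smul, abs_of_pos hr]
  have hscale : (iteratedFDeriv ℝ k (‖·‖) (r • x)).compContinuousLinearMap
      (fun _ => (e : F →L[ℝ] F)) = r ^ k • iteratedFDeriv ℝ k (‖·‖) (r • x) := by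
    ext m
    simp [he, ContinuousMultilinearMap.map_smul_univ]
  rw [hcomp, iteratedFDeriv_const_smul_apply (contDiffAt_norm ℝ hx), he, hscale] at h
  simpa [norm_smul, abs_of_pos hr, pow_pos hr] using (congrArg norm h).symm

theorem exists_pow_mul_norm_iteratedFDeriv_norm_le [FiniteDimensional ℝ F] (k : ℕ) :
    ∃ C > 0, ∀ x : F, x ≠ 0 → ‖x‖ ^ k * ‖iteratedFDeriv ℝ k (‖·‖) x‖ ≤ C * ‖x‖ := by
  have hcont : ContinuousOn (iteratedFDeriv ℝ k (‖·‖ : F → ℝ)) (sphere 0 1) := fun u hu =>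
    ((contDiffAt_norm ℝ (ne_zero_of_mem_unit_sphere ⟨u, hu⟩)).continuousAt_iteratedFDeriv
      le_top).continuousWithinAt
  obtain ⟨C, hC⟩ := (isCompact_sphere (0 : F) 1).exists_bound_of_continuousOn hcont
  refine ⟨max C 1, by positivity, fun x hx => ?_⟩
  have hxpos : 0 < ‖x‖ := norm_pos_iff.2 hx
  have hu : ‖x‖⁻¹ • x ∈ sphere (0 : F) 1 := by
    simp [norm_smul, hxpos.ne']
  have hscale := pow_mul_norm_iteratedFDeriv_norm_smul k hxpos (ne_zero_of_mem_unit_sphere ⟨_, hu⟩)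
  rw [smul_inv_smul₀ hxpos.ne'] at hscale
  rw [hscale, mul_comm]
  exact mul_le_mul_of_nonneg_right ((hC _ hu).trans (le_max_left _ _)) hxpos.le

end NormDerivatives

section JapaneseBracket

variable {E : Type*} [NormedAddCommGroup E] [InnerProductSpace ℝ E]

def WithLp.inrₗᵢ : E →ₗᵢ[ℝ] WithLp 2 (ℝ × E) where
  toFun x := WithLp.toLp 2 (0, x)
  map_add' x y := by simp [← WithLp.toLp_add]
  map_smul' c x := by simp [← WithLp.toLp_smul]
  norm_map' := WithLp.norm_toLp_snd 2 ℝ E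

theorem norm_iteratedFDeriv_norm_add_comp_le {G : Type*} [NormedAddCommGroup G]
    [InnerProductSpace ℝ G] (L : E →ₗᵢ[ℝ] G) (v : G) (hv : ∀ x, v + L x ≠ 0) (k : ℕ) (x : E) :
    ‖iteratedFDeriv ℝ k (fun y => ‖v + L y‖) x‖ ≤ ‖iteratedFDeriv ℝ k (‖·‖) (v + L x)‖ := by
  let U : Set G := {z | v + z ≠ 0}
  have hU : IsOpen U := isOpen_ne_fun (continuous_const.add continuous_id) continuous_const
  have hsmooth : ContDiffOn ℝ ⊤ (fun z => ‖v + z‖) U := fun z hz =>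
    ((contDiffAt_norm ℝ hz).comp z (contDiffAt_const.add contDiffAt_id)).contDiffWithinAt
  have hpre : L.toContinuousLinearMap ⁻¹' U = univ := eq_univ_of_forall hv
  have h := L.toContinuousLinearMap.iteratedFDerivWithin_comp_right hsmooth hU.uniqueDiffOn
    (by rw [hpre]; exact uniqueDiffOn_univ) (hv x) (i := k) le_top
  have hmem : L.toContinuousLinearMap x ∈ U := hv x
  rw [hpre, iteratedFDerivWithin_univ, iteratedFDerivWithin_of_isOpen k hU hmem,
    iteratedFDeriv_comp_add_left] at h
  calc ‖iteratedFDeriv ℝ k (fun y => ‖v + L y‖) x‖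
      = ‖(iteratedFDeriv ℝ k (‖·‖) (v + L x)).compContinuousLinearMap
          fun _ => L.toContinuousLinearMap‖ := congrArg norm h
    _ ≤ ‖iteratedFDeriv ℝ k (‖·‖) (v + L x)‖ * ∏ _ : Fin k, ‖L.toContinuousLinearMap‖ :=
      ContinuousMultilinearMap.norm_compContinuousLinearMap_le _ _
    _ ≤ ‖iteratedFDeriv ℝ k (‖·‖) (v + L x)‖ :=
      mul_le_of_le_one_right (norm_nonneg _) (prod_le_one (fun _ _ => norm_nonneg _)
        fun _ _ => L.norm_toContinuousLinearMap_le)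

theorem exists_pow_mul_norm_iteratedFDeriv_sqrt_two_add_sq_le [FiniteDimensional ℝ E] (k : ℕ) :
    ∃ C > 0, ∀ x : E, √(2 + ‖x‖ ^ 2) ^ k * ‖iteratedFDeriv ℝ k (fun y => √(2 + ‖y‖ ^ 2)) x‖
      ≤ C * √(2 + ‖x‖ ^ 2) := by
  obtain ⟨C, hC, hbound⟩ := exists_pow_mul_norm_iteratedFDeriv_norm_le (F := WithLp 2 (ℝ × E)) k
  let v : WithLp 2 (ℝ × E) := WithLp.toLp 2 (√2, 0)
  have hnorm : ∀ x : E, ‖v + WithLp.inrₗᵢ x‖ = √(2 + ‖x‖ ^ 2) := fun x => by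
    simp [v, WithLp.inrₗᵢ, ← WithLp.toLp_add, WithLp.prod_norm_eq_of_L2]
  have hne : ∀ x : E, v + WithLp.inrₗᵢ x ≠ 0 := fun x h => by
    have := hnorm x
    rw [h, norm_zero] at this
    exact (Real.sqrt_pos.2 (by positivity : (0 : ℝ) < 2 + ‖x‖ ^ 2)).ne this
  have hfun : (fun y : E => √(2 + ‖y‖ ^ 2)) = fun y => ‖v + WithLp.inrₗᵢ y‖ :=
    funext fun y => (hnorm y).symm
  refine ⟨C, hC, fun x => ?_⟩
  rw [← hnorm x, hfun]
  calc ‖v + WithLp.inrₗᵢ x‖ ^ k * ‖iteratedFDeriv ℝ k (fun y => ‖v + WithLp.inrₗᵢ y‖) x‖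
      ≤ ‖v + WithLp.inrₗᵢ x‖ ^ k * ‖iteratedFDeriv ℝ k (‖·‖) (v + WithLp.inrₗᵢ x)‖ := by
        gcongr
        exact norm_iteratedFDeriv_norm_add_comp_le _ v hne k x
    _ ≤ C * ‖v + WithLp.inrₗᵢ x‖ := hbound _ (hne x)

theorem contDiff_sqrt_two_add_sq : ContDiff ℝ ⊤ (fun y : E => √(2 + ‖y‖ ^ 2)) :=
  (contDiff_const.add (contDiff_norm_sq ℝ)).sqrt fun _ => by positivity

theorem exists_norm_iteratedFDeriv_norm_mul_sqrt_le [FiniteDimensional ℝ E] (k : ℕ) :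
    ∃ A > 0, ∀ x : E, x ≠ 0 → ‖iteratedFDeriv ℝ k (fun ξ => ‖ξ‖ * √(2 + ‖ξ‖ ^ 2)) x‖
      ≤ A * (‖x‖ * √(2 + ‖x‖ ^ 2) / ‖x‖ ^ k) := by
  choose cN hcN hN using fun i => exists_pow_mul_norm_iteratedFDeriv_norm_le (F := E) i
  choose cM hcM hM using fun j => exists_pow_mul_norm_iteratedFDeriv_sqrt_two_add_sq_le (E := E) j
  refine ⟨∑ i ∈ range (k + 1), k.choose i * cN i * cM (k - i), sum_pos (fun i hi => ?_)
    nonempty_range_add_one, fun x hx => ?_⟩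
  · have := Nat.choose_pos (Nat.lt_succ_iff.1 (mem_range.1 hi))
    have := hcN i
    have := hcM (k - i)
    positivity
  have hU : IsOpen ({0}ᶜ : Set E) := isOpen_compl_singleton
  have hleib := norm_iteratedFDerivWithin_mul_le (s := {0}ᶜ)
    (fun y hy => (contDiffAt_norm ℝ hy).contDiffWithinAt) contDiff_sqrt_two_add_sq.contDiffOn
    hU.uniqueDiffOn hx (n := k) le_top
  have hwithin : ∀ n (f : E → ℝ), iteratedFDerivWithin ℝ n f {0}ᶜ x = iteratedFDeriv ℝ n f x :=
    fun n f => iteratedFDerivWithin_of_isOpen n hU hx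
  simp only [hwithin] at hleib
  have hrt : ‖x‖ ≤ √(2 + ‖x‖ ^ 2) := Real.le_sqrt_of_sq_le (by linarith)
  rw [mul_div_assoc', le_div_iff₀ (pow_pos (norm_pos_iff.2 hx) k), mul_comm]
  calc ‖x‖ ^ k * ‖iteratedFDeriv ℝ k (fun ξ => ‖ξ‖ * √(2 + ‖ξ‖ ^ 2)) x‖
      ≤ ‖x‖ ^ k * ∑ i ∈ range (k + 1), k.choose i * ‖iteratedFDeriv ℝ i (‖·‖) x‖ *
          ‖iteratedFDeriv ℝ (k - i) (fun y => √(2 + ‖y‖ ^ 2)) x‖ := by gcongr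
    _ = ∑ i ∈ range (k + 1), k.choose i * (‖x‖ ^ i * ‖iteratedFDeriv ℝ i (‖·‖) x‖) *
          (‖x‖ ^ (k - i) * ‖iteratedFDeriv ℝ (k - i) (fun y => √(2 + ‖y‖ ^ 2)) x‖) := by
        rw [mul_sum]
        refine sum_congr rfl fun i hi => ?_
        rw [← Nat.add_sub_cancel' (Nat.lt_succ_iff.1 (mem_range.1 hi)), pow_add,
          Nat.add_sub_cancel_left]
        ring
    _ ≤ ∑ i ∈ range (k + 1), k.choose i * (cN i * ‖x‖) * (cM (k - i) * √(2 + ‖x‖ ^ 2)) := by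
        refine sum_le_sum fun i _ => ?_
        have := hcN i
        gcongr _ * ?_ * ?_
        · exact hN i x hx
        · exact (mul_le_mul_of_nonneg_right (pow_le_pow_left₀ (norm_nonneg x) hrt _)
            (norm_nonneg _)).trans (hM _ x)
    _ = (∑ i ∈ range (k + 1), k.choose i * cN i * cM (k - i)) * (‖x‖ * √(2 + ‖x‖ ^ 2)) := by
        rw [sum_mul]
        exact sum_congr rfl fun i _ => by ring

end JapaneseBracket

theorem sqrt_two_add_sq_div_pow_le {u v : ℝ} (k : ℕ) (hv : 0 < v) (hvu : v / 2 ≤ u)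
    (huv : u ≤ 2 * v) : √(2 + u ^ 2) / u ^ k ≤ 2 ^ (k + 1) * (√(2 + v ^ 2) / v ^ k) := by
  have hsqrt : √(2 + u ^ 2) ≤ 2 * √(2 + v ^ 2) := by
    rw [Real.sqrt_le_iff, mul_pow, Real.sq_sqrt (by positivity)]
    exact ⟨by positivity, by nlinarith⟩
  calc √(2 + u ^ 2) / u ^ k ≤ 2 * √(2 + v ^ 2) / (v / 2) ^ k := by gcongr
    _ = 2 ^ (k + 1) * (√(2 + v ^ 2) / v ^ k) := by
      rw [div_pow]
      field_simp
      ring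

theorem norm_mem_Icc_of_mem_ball_half_norm {E : Type*} [SeminormedAddCommGroup E] {b y : E}
    (hy : y ∈ ball b (‖b‖ / 2)) : ‖y‖ ∈ Icc (‖b‖ / 2) (2 * ‖b‖) := by
  rw [mem_ball, dist_eq_norm] at hy
  constructor <;> linarith [norm_sub_norm_le y b, norm_sub_norm_le b y, norm_sub_rev y b]

theorem norm_sub_le_of_le_two_mul_norm_sub {E G : Type*} [SeminormedAddCommGroup E]
    [SeminormedAddCommGroup G] {g : E → G} {k : ℕ} {A : ℝ} (hA : 0 ≤ A)
    (hg : ∀ x, x ≠ 0 → ‖g x‖ ≤ A * (‖x‖ * √(2 + ‖x‖ ^ 2) / ‖x‖ ^ k))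
    {a b : E} (ha : a ≠ 0) (hb : b ≠ 0) (hab : ‖a‖ ≤ ‖b‖) (hfar : ‖b‖ ≤ 2 * ‖b - a‖) :
    ‖g b - g a‖ ≤
      2 * A * (√(2 + ‖a‖ ^ 2) / ‖a‖ ^ k + √(2 + ‖b‖ ^ 2) / ‖b‖ ^ k) * ‖b - a‖ := by
  have hgx : ∀ x, x ≠ 0 → ‖g x‖ ≤ A * ‖x‖ * (√(2 + ‖x‖ ^ 2) / ‖x‖ ^ k) := fun x hx => by
    rw [mul_assoc, ← mul_div_assoc]
    exact hg x hx
  calc ‖g b - g a‖ ≤ ‖g b‖ + ‖g a‖ := norm_sub_le _ _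
    _ ≤ A * ‖b‖ * (√(2 + ‖b‖ ^ 2) / ‖b‖ ^ k) + A * ‖a‖ * (√(2 + ‖a‖ ^ 2) / ‖a‖ ^ k) :=
      add_le_add (hgx b hb) (hgx a ha)
    _ ≤ A * (2 * ‖b - a‖) * (√(2 + ‖b‖ ^ 2) / ‖b‖ ^ k)
        + A * (2 * ‖b - a‖) * (√(2 + ‖a‖ ^ 2) / ‖a‖ ^ k) := by
      gcongr
      exact hab.trans hfar
    _ = 2 * A * (√(2 + ‖a‖ ^ 2) / ‖a‖ ^ k + √(2 + ‖b‖ ^ 2) / ‖b‖ ^ k) * ‖b - a‖ := by ring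

section Difference

variable {E G : Type*} [NormedAddCommGroup E] [NormedSpace ℝ E] [NormedAddCommGroup G]
  [NormedSpace ℝ G]

theorem norm_sub_le_of_two_mul_norm_sub_lt {g : E → G} {k : ℕ} {A : ℝ} (hA : 0 ≤ A)
    (hdiff : DifferentiableOn ℝ g {0}ᶜ)
    (hg' : ∀ x, x ≠ 0 → ‖fderiv ℝ g x‖ ≤ A * (‖x‖ * √(2 + ‖x‖ ^ 2) / ‖x‖ ^ (k + 1)))
    {a b : E} (hb : b ≠ 0) (hnear : 2 * ‖b - a‖ < ‖b‖) :
    ‖g b - g a‖ ≤ 2 ^ (k + 1) * A * (√(2 + ‖b‖ ^ 2) / ‖b‖ ^ k) * ‖b - a‖ := by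
  have hb₀ := norm_pos_iff.2 hb
  have hne : ∀ y ∈ ball b (‖b‖ / 2), y ≠ 0 := fun y hy =>
    norm_pos_iff.1 ((half_pos hb₀).trans_le (norm_mem_Icc_of_mem_ball_half_norm hy).1)
  have hderiv : ∀ y ∈ ball b (‖b‖ / 2),
      ‖fderiv ℝ g y‖ ≤ 2 ^ (k + 1) * A * (√(2 + ‖b‖ ^ 2) / ‖b‖ ^ k) := fun y hy => by
    obtain ⟨hby, hyb⟩ := norm_mem_Icc_of_mem_ball_half_norm hy
    have hy₀ := norm_pos_iff.2 (hne y hy)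
    calc ‖fderiv ℝ g y‖ ≤ A * (√(2 + ‖y‖ ^ 2) / ‖y‖ ^ k) := by
          have := hg' y (hne y hy)
          rwa [pow_succ' ‖y‖ k, mul_div_mul_left _ _ hy₀.ne'] at this
      _ ≤ A * (2 ^ (k + 1) * (√(2 + ‖b‖ ^ 2) / ‖b‖ ^ k)) := by
          gcongr
          exact sqrt_two_add_sq_div_pow_le k hb₀ hby hyb
      _ = 2 ^ (k + 1) * A * (√(2 + ‖b‖ ^ 2) / ‖b‖ ^ k) := by ring
  have ha : a ∈ ball b (‖b‖ / 2) := by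
    rw [mem_ball, dist_eq_norm, norm_sub_rev]
    linarith
  exact (convex_ball b (‖b‖ / 2)).norm_image_sub_le_of_norm_fderiv_le
    (fun y hy => hdiff.differentiableAt (isOpen_compl_singleton.mem_nhds (hne y hy)))
    hderiv ha (mem_ball_self (half_pos hb₀))

theorem norm_sub_le_of_norm_le_of_norm_fderiv_le {g : E → G} {k : ℕ} {A : ℝ}
    (hdiff : DifferentiableOn ℝ g {0}ᶜ)
    (hg : ∀ x, x ≠ 0 → ‖g x‖ ≤ A * (‖x‖ * √(2 + ‖x‖ ^ 2) / ‖x‖ ^ k))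
    (hg' : ∀ x, x ≠ 0 → ‖fderiv ℝ g x‖ ≤ A * (‖x‖ * √(2 + ‖x‖ ^ 2) / ‖x‖ ^ (k + 1)))
    {a b : E} (ha : a ≠ 0) (hb : b ≠ 0) :
    ‖g b - g a‖ ≤
      2 ^ (k + 1) * A * (√(2 + ‖a‖ ^ 2) / ‖a‖ ^ k + √(2 + ‖b‖ ^ 2) / ‖b‖ ^ k) * ‖b - a‖ := by
  wlog hab : ‖a‖ ≤ ‖b‖ generalizing a b
  · have := this hb ha (le_of_not_ge hab)
    rwa [norm_sub_rev (g a), norm_sub_rev a, add_comm (√(2 + ‖b‖ ^ 2) / ‖b‖ ^ k)] at this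
  have hA : 0 ≤ A :=
    nonneg_of_mul_nonneg_left ((norm_nonneg _).trans (hg a ha)) (by positivity [norm_pos_iff.2 ha])
  have hpa : 0 ≤ √(2 + ‖a‖ ^ 2) / ‖a‖ ^ k := by positivity
  rcases le_or_gt ‖b‖ (2 * ‖b - a‖) with hfar | hnear
  · refine (norm_sub_le_of_le_two_mul_norm_sub hA hg ha hb hab hfar).trans ?_
    gcongr
    exact le_self_pow₀ one_le_two k.succ_ne_zero
  · refine (norm_sub_le_of_two_mul_norm_sub_lt hA hdiff hg' hb hnear).trans ?_
    gcongr
    exact le_add_of_nonneg_left hpa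

end Difference

/-- For `H(ξ) = ‖ξ‖·√(2 + ‖ξ‖²)` on `ℝ³`, there is `C > 0` such that for `1 ≤ k ≤ 4`
and nonzero `ξ₁, ξ₂`:
`‖D^k H(ξ₂) - D^k H(-ξ₁)‖ ≤ C·(⟨ξ₁⟩/‖ξ₁‖^k + ⟨ξ₂⟩/‖ξ₂‖^k)·‖ξ₁ + ξ₂‖`. -/
theorem stmt_7 (H : EuclideanSpace ℝ (Fin 3) → ℝ)
    (hH : ∀ ξ : EuclideanSpace ℝ (Fin 3), H ξ = ‖ξ‖ * Real.sqrt (2 + ‖ξ‖ ^ 2)) :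
    ∃ C > 0, ∀ k : ℕ, 1 ≤ k → k ≤ 4 →
      ∀ ξ₁ ξ₂ : EuclideanSpace ℝ (Fin 3), ξ₁ ≠ 0 → ξ₂ ≠ 0 →
      ‖iteratedFDeriv ℝ k H ξ₂ - iteratedFDeriv ℝ k H (-ξ₁)‖ ≤
        C * (Real.sqrt (2 + ‖ξ₁‖ ^ 2) / ‖ξ₁‖ ^ k +
              Real.sqrt (2 + ‖ξ₂‖ ^ 2) / ‖ξ₂‖ ^ k) * ‖ξ₁ + ξ₂‖ := by
  replace hH : H = fun ξ => ‖ξ‖ * √(2 + ‖ξ‖ ^ 2) := funext hH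
  choose A hA hbound using
    exists_norm_iteratedFDeriv_norm_mul_sqrt_le (E := EuclideanSpace ℝ (Fin 3))
  simp only [← hH] at hbound
  set S := ∑ m ∈ range 6, A m
  have hS : 0 < S := sum_pos (fun m _ => hA m) nonempty_range_add_one
  have hboundS : ∀ m < 6, ∀ x, x ≠ 0 →
      ‖iteratedFDeriv ℝ m H x‖ ≤ S * (‖x‖ * √(2 + ‖x‖ ^ 2) / ‖x‖ ^ m) :=
    fun m hm x hx => (hbound m x hx).trans <| by
      gcongr
      exact single_le_sum (fun j _ => (hA j).le) (mem_range.2 hm)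
  refine ⟨32 * S, by positivity, fun k hk₁ hk₄ ξ₁ ξ₂ h₁ h₂ => ?_⟩
  have hdiff : DifferentiableOn ℝ (iteratedFDeriv ℝ k H) {0}ᶜ := fun x hx => by
    rw [hH]
    exact (((contDiffAt_norm ℝ hx).mul contDiff_sqrt_two_add_sq.contDiffAt
      ).differentiableAt_iteratedFDeriv (WithTop.coe_lt_top _)).differentiableWithinAt
  have h := norm_sub_le_of_norm_le_of_norm_fderiv_le hdiff (hboundS k (by omega))
    (fun x hx => by rw [norm_fderiv_iteratedFDeriv]; exact hboundS (k + 1) (by omega) x hx)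
    (neg_ne_zero.2 h₁) h₂
  rw [norm_neg, sub_neg_eq_add, add_comm ξ₂] at h
  refine h.trans ?_
  gcongr
  calc (2 : ℝ) ^ (k + 1) ≤ 2 ^ 5 := pow_le_pow_right₀ one_le_two (by omega)
    _ = 32 := by norm_num
end

section
/- Let h : ℝ → ℝ be defined by h(r) = r·√(2 + r²). Then for all real a, b ≥ 0: h(a+b) - h(a) - h(b) = a·b·(b + 2a)/(√(2+a²) + √(2+(a+b)²)) + a·b·(a + 2b)/(√(2+b²) + √(2+(a+b)²)). In particular h(a+b) - h(a) - h(b) ≥ 0. -/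
/-- For `h(r) = r·√(2 + r²)` and `a, b ≥ 0`:
`h(a+b) - h(a) - h(b) = ab(b+2a)/(√(2+a²) + √(2+(a+b)²)) + ab(a+2b)/(√(2+b²) + √(2+(a+b)²))`,
and in particular `h(a+b) - h(a) - h(b) ≥ 0`. -/
theorem stmt_10 (h : ℝ → ℝ) (hh : ∀ r : ℝ, h r = r * Real.sqrt (2 + r ^ 2))
    (a b : ℝ) (ha : 0 ≤ a) (hb : 0 ≤ b) :
    h (a + b) - h a - h b =
      a * b * (b + 2 * a) / (Real.sqrt (2 + a ^ 2) + Real.sqrt (2 + (a + b) ^ 2)) +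
        a * b * (a + 2 * b) / (Real.sqrt (2 + b ^ 2) + Real.sqrt (2 + (a + b) ^ 2)) ∧
    0 ≤ h (a + b) - h a - h b := by
  have hsa : (0:ℝ) < Real.sqrt (2 + a ^ 2) := Real.sqrt_pos.2 (by positivity)
  have hsb : (0:ℝ) < Real.sqrt (2 + b ^ 2) := Real.sqrt_pos.2 (by positivity)
  have hsc : (0:ℝ) < Real.sqrt (2 + (a + b) ^ 2) := Real.sqrt_pos.2 (by positivity)
  have ha2 : Real.sqrt (2 + a ^ 2) ^ 2 = 2 + a ^ 2 := Real.sq_sqrt (by positivity)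
  have hb2 : Real.sqrt (2 + b ^ 2) ^ 2 = 2 + b ^ 2 := Real.sq_sqrt (by positivity)
  have hc2 : Real.sqrt (2 + (a + b) ^ 2) ^ 2 = 2 + (a + b) ^ 2 := Real.sq_sqrt (by positivity)
  have key : h (a + b) - h a - h b =
      a * b * (b + 2 * a) / (Real.sqrt (2 + a ^ 2) + Real.sqrt (2 + (a + b) ^ 2)) +
        a * b * (a + 2 * b) / (Real.sqrt (2 + b ^ 2) + Real.sqrt (2 + (a + b) ^ 2)) := by
    rw [hh, hh, hh]
    set sa := Real.sqrt (2 + a ^ 2)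
    set sb := Real.sqrt (2 + b ^ 2)
    set sc := Real.sqrt (2 + (a + b) ^ 2)
    have e1 : sc - sa = b * (b + 2 * a) / (sa + sc) := by
      rw [eq_div_iff (by positivity)]
      nlinarith [ha2, hc2]
    have e2 : sc - sb = a * (a + 2 * b) / (sb + sc) := by
      rw [eq_div_iff (by positivity)]
      nlinarith [hb2, hc2]
    have goal : (a + b) * sc - a * sa - b * sb = a * (sc - sa) + b * (sc - sb) := by ring
    rw [goal, e1, e2]
    ring
  refine ⟨key, ?_⟩
  rw [key]
  positivity
end

section
/- Define H : ℝ³ → ℝ by H(ξ) = ‖ξ‖·√(2 + ‖ξ‖²). Let ξ, ξ₁ ∈ ℝ³ be nonzero with ⟨ξ, ξ₁⟩ ≤ -½·‖ξ‖·‖ξ₁‖, and set ξ₂ = ξ - ξ₁. Then ‖ξ₂‖² - ‖ξ₁‖² ≥ ‖ξ‖·‖ξ₁‖, and H(ξ) + H(ξ₂) - H(ξ₁) ≥ √2 · ‖ξ‖·‖ξ₁‖/(‖ξ₁‖ + ‖ξ₂‖). -/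
open Real

theorem norm_mul_norm_le_norm_sub_sq_sub_norm_sq {F : Type*} [NormedAddCommGroup F]
    [InnerProductSpace ℝ F] {x y : F} (h : inner ℝ x y ≤ -(1 / 2) * (‖x‖ * ‖y‖)) :
    ‖x‖ * ‖y‖ ≤ ‖x - y‖ ^ 2 - ‖y‖ ^ 2 := by
  rw [norm_sub_sq_real]
  nlinarith [sq_nonneg ‖x‖]

/-- `r √(2 + r²) - √2 r = r (√(2 + r²) - √2)` is a product of nonnegative increasing
functions of `r ≥ 0`. -/
theorem sqrt_two_mul_sub_le_mul_sqrt_sub {a b : ℝ} (ha : 0 ≤ a) (hab : a ≤ b) :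
    √2 * (b - a) ≤ b * √(2 + b ^ 2) - a * √(2 + a ^ 2) := by
  have hmono : a * (√(2 + a ^ 2) - √2) ≤ b * (√(2 + b ^ 2) - √2) :=
    mul_le_mul hab (by gcongr)
      (sub_nonneg.2 (sqrt_le_sqrt (le_add_of_nonneg_right (sq_nonneg a)))) (ha.trans hab)
  linarith

theorem sqrt_two_mul_div_le_mul_sqrt_sub {a b c : ℝ} (ha : 0 ≤ a) (hb : 0 ≤ b) (hc : 0 ≤ c)
    (h : c * a ≤ b ^ 2 - a ^ 2) :
    √2 * (c * a / (a + b)) ≤ b * √(2 + b ^ 2) - a * √(2 + a ^ 2) := by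
  have hab : a ≤ b :=
    (pow_le_pow_iff_left₀ ha hb two_ne_zero).1 (by nlinarith [mul_nonneg hc ha])
  have hdiv : c * a / (a + b) ≤ b - a :=
    div_le_of_le_mul₀ (by positivity) (sub_nonneg.2 hab) (by linarith)
  calc √2 * (c * a / (a + b)) ≤ √2 * (b - a) := by gcongr
    _ ≤ b * √(2 + b ^ 2) - a * √(2 + a ^ 2) := sqrt_two_mul_sub_le_mul_sqrt_sub ha hab

theorem stmt_13_general (H : EuclideanSpace ℝ (Fin 3) → ℝ)
    (hH : ∀ ξ : EuclideanSpace ℝ (Fin 3), H ξ = ‖ξ‖ * Real.sqrt (2 + ‖ξ‖ ^ 2))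
    (ξ ξ₁ : EuclideanSpace ℝ (Fin 3))
    (hang : (inner ℝ ξ ξ₁ : ℝ) ≤ -(1 / 2) * (‖ξ‖ * ‖ξ₁‖)) :
    ‖ξ‖ * ‖ξ₁‖ ≤ ‖ξ - ξ₁‖ ^ 2 - ‖ξ₁‖ ^ 2 ∧
    Real.sqrt 2 * (‖ξ‖ * ‖ξ₁‖ / (‖ξ₁‖ + ‖ξ - ξ₁‖)) ≤ H ξ + H (ξ - ξ₁) - H ξ₁ := by
  have hsep := norm_mul_norm_le_norm_sub_sq_sub_norm_sq hang
  refine ⟨hsep, ?_⟩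
  have hgain := sqrt_two_mul_div_le_mul_sqrt_sub (norm_nonneg ξ₁) (norm_nonneg (ξ - ξ₁))
    (norm_nonneg ξ) (by linarith)
  have hHξ : 0 ≤ H ξ := hH ξ ▸ by positivity
  rw [hH (ξ - ξ₁), hH ξ₁]
  linarith

/-- For `H(ξ) = ‖ξ‖·√(2 + ‖ξ‖²)` on `ℝ³`: if `ξ, ξ₁ ≠ 0` with `⟨ξ, ξ₁⟩ ≤ -½‖ξ‖‖ξ₁‖`,
then with `ξ₂ = ξ - ξ₁` one has `‖ξ₂‖² - ‖ξ₁‖² ≥ ‖ξ‖‖ξ₁‖` and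
`H(ξ) + H(ξ₂) - H(ξ₁) ≥ √2·‖ξ‖‖ξ₁‖/(‖ξ₁‖ + ‖ξ₂‖)`. -/
theorem stmt_13 (H : EuclideanSpace ℝ (Fin 3) → ℝ)
    (hH : ∀ ξ : EuclideanSpace ℝ (Fin 3), H ξ = ‖ξ‖ * Real.sqrt (2 + ‖ξ‖ ^ 2))
    (ξ ξ₁ : EuclideanSpace ℝ (Fin 3)) (hξ : ξ ≠ 0) (hξ₁ : ξ₁ ≠ 0)
    (hang : (inner ℝ ξ ξ₁ : ℝ) ≤ -(1 / 2) * (‖ξ‖ * ‖ξ₁‖)) :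
    ‖ξ‖ * ‖ξ₁‖ ≤ ‖ξ - ξ₁‖ ^ 2 - ‖ξ₁‖ ^ 2 ∧
    Real.sqrt 2 * (‖ξ‖ * ‖ξ₁‖ / (‖ξ₁‖ + ‖ξ - ξ₁‖)) ≤ H ξ + H (ξ - ξ₁) - H ξ₁ :=
  stmt_13_general H hH ξ ξ₁ hang
end

section
/- Define H : ℝ³ → ℝ by H(ξ) = ‖ξ‖·√(2 + ‖ξ‖²), with gradient ∇H(η) = h'(‖η‖)·η/‖η‖ for η ≠ 0, where h'(r) = 2(1+r²)/√(2+r²). Let ξ, ξ₂ ∈ ℝ³ be nonzero with |⟨ξ, ξ₂⟩| ≤ ½·‖ξ‖·‖ξ₂‖, and suppose ξ₁ := ξ - ξ₂ ≠ 0. Then | ⟨ ξ - (⟨ξ,ξ₂⟩/‖ξ₂‖²)·ξ₂ , ∇H(ξ₁) ⟩ | ≥ (3/4)·‖ξ‖². -/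
/-!
Away from the origin, `∇H(η) = (h'(r)/r) • η` with `r = ‖η‖`, and `h'(r)/r ≥ 1` because
`r √(2 + r²) ≤ 1 + r²`. Pairing `∇H(ξ - ξ₂)` with the component `ξ^⊥` of `ξ` orthogonal to `ξ₂`
kills the `ξ₂` part and leaves `(h'(r)/r) ‖ξ^⊥‖²`, where `‖ξ^⊥‖² = ‖ξ‖² - ⟪ξ, ξ₂⟫² / ‖ξ₂‖²`.
The angle condition `|⟪ξ, ξ₂⟫| ≤ ½ ‖ξ‖ ‖ξ₂‖` bounds this below by `¾ ‖ξ‖²`.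
-/

open Real
open scoped RealInnerProductSpace

section InnerProductSpace

variable {E : Type*} [NormedAddCommGroup E] [InnerProductSpace ℝ E]

/-- `ξ - (⟪ξ, v⟫ / ‖v‖²) • v` is the component of `ξ` orthogonal to `v`. The identity also holds
for `v = 0`, where the junk value `⟪ξ, 0⟫ / 0 = 0` makes both sides `‖ξ‖²`. -/
theorem inner_sub_inner_div_smul_sub_eq (ξ v : E) :
    ⟪ξ - (⟪ξ, v⟫ / ‖v‖ ^ 2) • v, ξ - v⟫ = ‖ξ‖ ^ 2 - ⟪ξ, v⟫ ^ 2 / ‖v‖ ^ 2 := by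
  have hproj : ⟪ξ, v⟫ / ‖v‖ ^ 2 * ‖v‖ ^ 2 = ⟪ξ, v⟫ := by
    rcases eq_or_ne v 0 with rfl | hv
    · simp
    · exact div_mul_cancel₀ _ (by positivity)
  simp only [inner_sub_left, inner_sub_right, real_inner_smul_left, real_inner_self_eq_norm_sq,
    real_inner_comm ξ v]
  linear_combination hproj

theorem sq_inner_div_sq_norm_le {ξ v : E} {c : ℝ} (h : |⟪ξ, v⟫| ≤ c * (‖ξ‖ * ‖v‖)) :
    ⟪ξ, v⟫ ^ 2 / ‖v‖ ^ 2 ≤ c ^ 2 * ‖ξ‖ ^ 2 := by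
  refine div_le_of_le_mul₀ (by positivity) (by positivity) ?_
  calc ⟪ξ, v⟫ ^ 2 = |⟪ξ, v⟫| ^ 2 := (sq_abs _).symm
    _ ≤ (c * (‖ξ‖ * ‖v‖)) ^ 2 := pow_le_pow_left₀ (abs_nonneg _) h 2
    _ = c ^ 2 * ‖ξ‖ ^ 2 * ‖v‖ ^ 2 := by ring

variable [CompleteSpace E]

theorem hasGradientAt_comp_norm_sq {g : ℝ → ℝ} {g' : ℝ} (x : E)
    (hg : HasDerivAt g g' (‖x‖ ^ 2)) :
    HasGradientAt (fun y : E => g (‖y‖ ^ 2)) ((2 * g') • x) x := by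
  rw [hasGradientAt_iff_hasFDerivAt]
  refine (hg.comp_hasFDerivAt x (hasStrictFDerivAt_norm_sq x).hasFDerivAt).congr_fderiv ?_
  ext v
  simp only [smul_apply, coe_innerSL_apply, nsmul_eq_mul, Nat.cast_ofNat,
    smul_eq_mul, map_smul, InnerProductSpace.toDual_apply_apply]
  ring

end InnerProductSpace

theorem hasDerivAt_sqrt_mul_two_add {t : ℝ} (ht : 0 < t) :
    HasDerivAt (fun s => √(s * (2 + s))) ((1 + t) / √(t * (2 + t))) t := by
  have hpoly : HasDerivAt (fun s => s * (2 + s)) (2 + 2 * t) t := by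
    simpa [two_mul, add_assoc] using (hasDerivAt_id' t).fun_mul ((hasDerivAt_id' t).const_add 2)
  convert hpoly.sqrt (by positivity) using 1
  field_simp

theorem one_le_one_add_div_sqrt_mul_two_add {t : ℝ} (ht : 0 < t) :
    1 ≤ (1 + t) / √(t * (2 + t)) := by
  refine (one_le_div (by positivity)).mpr (Real.sqrt_le_iff.mpr ⟨by positivity, ?_⟩)
  nlinarith

theorem norm_mul_sqrt_two_add_sq {E : Type*} [SeminormedAddCommGroup E] (y : E) :
    ‖y‖ * √(2 + ‖y‖ ^ 2) = √(‖y‖ ^ 2 * (2 + ‖y‖ ^ 2)) := by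
  rw [Real.sqrt_mul (by positivity), Real.sqrt_sq (norm_nonneg y)]

theorem gradient_norm_mul_sqrt_two_add_sq {E : Type*} [NormedAddCommGroup E]
    [InnerProductSpace ℝ E] [CompleteSpace E] {x : E} (hx : x ≠ 0) :
    gradient (fun y : E => ‖y‖ * √(2 + ‖y‖ ^ 2)) x =
      (2 * ((1 + ‖x‖ ^ 2) / √(‖x‖ ^ 2 * (2 + ‖x‖ ^ 2)))) • x := by
  simp only [norm_mul_sqrt_two_add_sq]
  exact (hasGradientAt_comp_norm_sq x (hasDerivAt_sqrt_mul_two_add (by positivity))).gradient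

theorem stmt_16_general (H : EuclideanSpace ℝ (Fin 3) → ℝ)
    (hH : ∀ ξ : EuclideanSpace ℝ (Fin 3), H ξ = ‖ξ‖ * Real.sqrt (2 + ‖ξ‖ ^ 2))
    (ξ ξ₂ : EuclideanSpace ℝ (Fin 3))
    (hang : |(inner ℝ ξ ξ₂ : ℝ)| ≤ 1 / 2 * (‖ξ‖ * ‖ξ₂‖)) (hξ₁ : ξ - ξ₂ ≠ 0) :
    3 / 4 * ‖ξ‖ ^ 2 ≤
      |(inner ℝ (ξ - ((inner ℝ ξ ξ₂ : ℝ) / ‖ξ₂‖ ^ 2) • ξ₂) (gradient H (ξ - ξ₂)) : ℝ)| := by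
  obtain rfl : H = fun y => ‖y‖ * √(2 + ‖y‖ ^ 2) := funext hH
  have hcoeff := one_le_one_add_div_sqrt_mul_two_add (pow_pos (norm_pos_iff.mpr hξ₁) 2)
  have hperp : 3 / 4 * ‖ξ‖ ^ 2 ≤ ‖ξ‖ ^ 2 - ⟪ξ, ξ₂⟫ ^ 2 / ‖ξ₂‖ ^ 2 := by
    linarith [sq_inner_div_sq_norm_le hang]
  rw [gradient_norm_mul_sqrt_two_add_sq hξ₁, real_inner_smul_right,
    inner_sub_inner_div_smul_sub_eq]
  calc 3 / 4 * ‖ξ‖ ^ 2 ≤ ‖ξ‖ ^ 2 - ⟪ξ, ξ₂⟫ ^ 2 / ‖ξ₂‖ ^ 2 := hperp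
    _ ≤ _ := le_mul_of_one_le_left (hperp.trans' (by positivity)) (by linarith)
    _ ≤ _ := le_abs_self _

/-- For `H(ξ) = ‖ξ‖·√(2 + ‖ξ‖²)` on `ℝ³`: if `ξ, ξ₂ ≠ 0`, `|⟨ξ,ξ₂⟩| ≤ ½‖ξ‖‖ξ₂‖` and
`ξ₁ = ξ - ξ₂ ≠ 0`, then `|⟨ξ - (⟨ξ,ξ₂⟩/‖ξ₂‖²)ξ₂, ∇H(ξ₁)⟩| ≥ (3/4)‖ξ‖²`. -/
theorem stmt_16 (H : EuclideanSpace ℝ (Fin 3) → ℝ)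
    (hH : ∀ ξ : EuclideanSpace ℝ (Fin 3), H ξ = ‖ξ‖ * Real.sqrt (2 + ‖ξ‖ ^ 2))
    (ξ ξ₂ : EuclideanSpace ℝ (Fin 3)) (hξ : ξ ≠ 0) (hξ₂ : ξ₂ ≠ 0)
    (hang : |(inner ℝ ξ ξ₂ : ℝ)| ≤ 1 / 2 * (‖ξ‖ * ‖ξ₂‖)) (hξ₁ : ξ - ξ₂ ≠ 0) :
    3 / 4 * ‖ξ‖ ^ 2 ≤
      |(inner ℝ (ξ - ((inner ℝ ξ ξ₂ : ℝ) / ‖ξ₂‖ ^ 2) • ξ₂) (gradient H (ξ - ξ₂)) : ℝ)| :=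
  stmt_16_general H hH ξ ξ₂ hang hξ₁
end
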